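/- The 2n−2 polynomials ν₂, ν₃, …, ν_{2n−1} ∈ R are algebraically independent over ℂ. -/

import Mathlib

/-!
Jacobian criterion: in characteristic zero, polynomials `f_i` are algebraically independent as
soon as their Jacobian matrix has full rank at a single point, because for a relation `P` of
minimal degree the vector `(∂P/∂y_i)(f)` would be a nonzero polynomial vector in the left kernel
of the Jacobian.

We evaluate at the regular `n`-gon `z_j = ζ ^ j`, `w_j = ζ ^ (-j)`. There the row of `ν_k` is
`∂ν_k/∂z_j = γ_k ζ ^ (j (k - 3))`, `∂ν_k/∂w_j = δ_k ζ ^ (j (k - 1))`: only two Fourier modes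
occur, so rows `k` and `k'` interact only when `k ≡ k' [MOD n]`, i.e. for the pairs
`{k, k + n}`. Since `δ_{k+n} = δ_k` and `γ_{k+n} = γ_k + (i/4) n (ζ - ζ⁻¹)`, pairing with
suitable dual Fourier columns yields an upper triangular matrix whose diagonal entries are
nonzero multiples of `δ_k` (for `2 ≤ k < n`) or of `ζ - ζ⁻¹` (for `k = n, n + 1`).
-/

open MvPolynomial Finset

noncomputable section

def Zv (n : ℕ) (j : Fin n) : MvPolynomial (Fin n ⊕ Fin n) ℂ := X (Sum.inl j)

def Wv (n : ℕ) (j : Fin n) : MvPolynomial (Fin n ⊕ Fin n) ℂ := X (Sum.inr j)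

/-- The `k`-th normalized harmonic moment. -/
def nu (n : ℕ) [NeZero n] (k : ℕ) : MvPolynomial (Fin n ⊕ Fin n) ℂ :=
  C (Complex.I / 4) *
    ∑ j : Fin n, (Wv n j - Wv n (j + 1)) *
      ∑ m ∈ Finset.range k, Zv n j ^ (k - 1 - m) * Zv n (j + 1) ^ m

theorem Fintype.sum_ite_add_eq {G M : Type*} [AddGroup G] [Fintype G] [DecidableEq G]
    [AddCommMonoid M] (a b : G) (F : G → M) :
    ∑ g, (if g + a = b then F g else 0) = F (b - a) := by
  simp_rw [← eq_sub_iff_add_eq]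
  exact Fintype.sum_ite_eq' (b - a) F

theorem natCast_mul_pow_pred {K : Type*} [Field K] {x : K} (hx : x ≠ 0) (k : ℕ) :
    (k : K) * x ^ (k - 1) = k * x ^ k * x⁻¹ := by
  cases k with
  | zero => simp
  | succ k => rw [Nat.add_sub_cancel, pow_succ]; field_simp

namespace MvPolynomial

variable {R σ ι : Type*}

theorem pderiv_aeval [CommSemiring R] [Fintype ι] (f : ι → MvPolynomial σ R) (x : σ)
    (P : MvPolynomial ι R) :
    pderiv x (aeval f P) = ∑ i, aeval f (pderiv i P) * pderiv x (f i) := by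
  classical
  induction P using MvPolynomial.induction_on with
  | C a => simp [algebraMap_eq]
  | add p q hp hq => simp only [map_add, hp, hq, add_mul, sum_add_distrib]
  | mul_X p i hp =>
    simp only [map_mul, aeval_X, pderiv_mul, hp, pderiv_X, Pi.single_apply, map_add, add_mul,
      sum_add_distrib, sum_mul, mul_ite, mul_one, mul_zero, apply_ite (aeval f), map_zero,
      ite_mul, zero_mul, sum_ite_eq, mem_univ, if_true]
    simp only [mul_right_comm, add_comm]

theorem totalDegree_pderiv_lt [CommSemiring R] [IsAddTorsionFree R] {P : MvPolynomial σ R}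
    {i : σ} (h : pderiv i P ≠ 0) : (pderiv i P).totalDegree < P.totalDegree := by
  classical
  have hsucc : ∀ d ∈ (pderiv i P).support, (d.sum fun _ e => e) + 1 ≤ P.totalDegree := by
    intro d hd
    rw [mem_support_iff, coeff_pderiv] at hd
    have hd' : d + Finsupp.single i 1 ∈ P.support := mem_support_iff.2 (left_ne_zero_of_mul hd)
    simpa [Finsupp.sum_add_index'] using le_totalDegree hd'
  obtain ⟨d, hd⟩ := support_nonempty.2 h
  exact (Finset.sup_lt_iff (by have := hsucc d hd; rw [Nat.bot_eq_zero]; omega)).2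
    fun d hd => hsucc d hd

theorem eq_C_of_pderiv_eq_zero [CommSemiring R] [IsAddTorsionFree R] {P : MvPolynomial σ R}
    (h : ∀ i, pderiv i P = 0) : P = C (coeff 0 P) := by
  classical
  ext m
  rw [coeff_C]
  split_ifs with hm
  · rw [hm]
  obtain ⟨i, hi⟩ : ∃ i, m i ≠ 0 := by
    by_contra! h0
    exact hm (Finsupp.ext h0).symm
  have hcoeff := coeff_pderiv (i := i) P (m - Finsupp.single i 1)
  rw [h i, coeff_zero,
    tsub_add_cancel_of_le (Finsupp.single_le_iff.2 (Nat.one_le_iff_ne_zero.2 hi)),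
    ← Nat.cast_succ, mul_comm, ← nsmul_eq_mul, eq_comm] at hcoeff
  exact (nsmul_eq_zero_iff_right (Nat.succ_ne_zero _)).1 hcoeff

def jacobian [CommSemiring R] (f : ι → MvPolynomial σ R) : Matrix ι σ (MvPolynomial σ R) :=
  Matrix.of fun i x => pderiv x (f i)

-- The ascriptions make `*` elaborate as `Matrix` rather than `CStarMatrix` multiplication.
theorem algebraicIndependent_of_det_jacobian_mul_ne_zero [CommRing R] [IsDomain R] [CharZero R]
    [Fintype σ] [Fintype ι] [DecidableEq ι] (f : ι → MvPolynomial σ R) (a : σ → R)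
    (T : Matrix σ ι R) (h : (((jacobian f).map (eval a) : Matrix ι σ R) * T).det ≠ 0) :
    AlgebraicIndependent R f := by
  have hdet : (jacobian f * (T.map C : Matrix σ ι (MvPolynomial σ R))).det ≠ 0 := by
    contrapose! h
    have hT : (T.map C).map (eval a) = T := by ext; simp
    rw [← hT, ← Matrix.map_mul, ← RingHom.mapMatrix_apply, ← RingHom.map_det, h, map_zero]
  have hker (c : ι → MvPolynomial σ R) (hc : ∀ x, ∑ i, c i * pderiv x (f i) = 0) :
      c = 0 := by
    refine Matrix.eq_zero_of_vecMul_eq_zero hdet ?_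
    have hJ : Matrix.vecMul c (jacobian f) = 0 := _root_.funext hc
    rw [← Matrix.vecMul_vecMul, hJ, Matrix.zero_vecMul]
  rw [algebraicIndependent_iff]
  intro P
  induction hd : P.totalDegree using Nat.strong_induction_on generalizing P with
  | _ d ih =>
  intro hP
  have hder (i : ι) : aeval f (pderiv i P) = 0 :=
    congrFun (hker _ fun x => by rw [← pderiv_aeval, hP, map_zero]) i
  have hconst (i : ι) : pderiv i P = 0 := by
    by_contra hne
    exact hne (ih _ (hd ▸ totalDegree_pderiv_lt hne) _ rfl (hder i))
  rw [eq_C_of_pderiv_eq_zero hconst] at hP ⊢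
  rw [aeval_C, algebraMap_eq, C_eq_zero] at hP
  rw [hP, map_zero]

variable {K : Type*} [Field K] {q s r : MvPolynomial σ K} {a : σ → K}

theorem eval_eq_div_of_mul_eq (h : q * s = r) (hq : eval a q ≠ 0) :
    eval a s = eval a r / eval a q := by
  rw [eq_div_iff hq, ← h, map_mul, mul_comm]

theorem eval_pderiv_eq_div_of_mul_eq (h : q * s = r) (hq : eval a q ≠ 0) (x : σ) :
    eval a (pderiv x s) =
      (eval a (pderiv x r) - eval a (pderiv x q) * eval a s) / eval a q := by
  rw [eq_div_iff hq, ← h, pderiv_mul, map_add, map_mul, map_mul]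
  ring

end MvPolynomial

namespace HarmonicMoments

variable {n : ℕ} {ζ : ℂ}

def vertex (ζ : ℂ) (j : Fin n) : ℂ := ζ ^ (j : ℕ)

/-- The regular `n`-gon `z_j = ζ ^ j`, with `w_j = ζ ^ (-j)` as conjugate coordinate. -/
def regularPolygon (ζ : ℂ) : Fin n ⊕ Fin n → ℂ :=
  Sum.elim (vertex ζ) fun j => (vertex ζ j)⁻¹

/-- The `ζ`-analogue `1 + ζ + ⋯ + ζ ^ (k - 1)` of `k`. -/
def qNat (ζ : ℂ) (k : ℕ) : ℂ := (1 - ζ ^ k) / (1 - ζ)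

def dzCoeff (ζ : ℂ) (k : ℕ) : ℂ :=
  Complex.I / 4 * (k * (ζ - ζ⁻¹) + qNat ζ k * (ζ⁻¹ - ζ ^ 2 * ζ⁻¹ ^ k))

def dwCoeff (ζ : ℂ) (k : ℕ) : ℂ := Complex.I / 4 * qNat ζ k * (1 - ζ * ζ⁻¹ ^ k)

theorem dzCoeff_zero : dzCoeff ζ 0 = 0 := by
  simp [dzCoeff, qNat]

theorem dzCoeff_one (hζ1 : ζ ≠ 1) : dzCoeff ζ 1 = 0 := by
  rw [dzCoeff, qNat, pow_one, div_self (sub_ne_zero.2 hζ1.symm), pow_one, sq, mul_self_mul_inv]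
  ring

theorem pderiv_inl_Zv (j' j : Fin n) :
    pderiv (Sum.inl j') (Zv n j) = if j = j' then 1 else 0 := by
  classical
  simp [Zv, pderiv_X, Pi.single_apply, eq_comm]

theorem pderiv_inr_Zv (j' j : Fin n) : pderiv (Sum.inr j') (Zv n j) = 0 :=
  pderiv_X_of_ne Sum.inl_ne_inr

theorem pderiv_inl_Wv (j' j : Fin n) : pderiv (Sum.inl j') (Wv n j) = 0 :=
  pderiv_X_of_ne Sum.inr_ne_inl

theorem pderiv_inr_Wv (j' j : Fin n) :
    pderiv (Sum.inr j') (Wv n j) = if j = j' then 1 else 0 := by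
  classical
  simp [Wv, pderiv_X, Pi.single_apply, eq_comm]

theorem eval_Zv (j : Fin n) : eval (regularPolygon ζ) (Zv n j) = vertex ζ j := by
  simp [Zv, regularPolygon]

theorem eval_Wv (j : Fin n) : eval (regularPolygon ζ) (Wv n j) = (vertex ζ j)⁻¹ := by
  simp [Wv, regularPolygon]

section RootOfUnity

variable (hζ : ζ ^ n = 1)
include hζ

theorem qNat_add_self (k : ℕ) : qNat ζ (k + n) = qNat ζ k := by
  rw [qNat, qNat, pow_add, hζ, mul_one]

theorem inv_pow_add_self (k : ℕ) : ζ⁻¹ ^ (k + n) = ζ⁻¹ ^ k := by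
  rw [pow_add, inv_pow ζ n, hζ, inv_one, mul_one]

theorem dwCoeff_add_self (k : ℕ) : dwCoeff ζ (k + n) = dwCoeff ζ k := by
  rw [dwCoeff, dwCoeff, qNat_add_self hζ, inv_pow_add_self hζ]

theorem dzCoeff_add_self (k : ℕ) :
    dzCoeff ζ (k + n) = dzCoeff ζ k + Complex.I / 4 * n * (ζ - ζ⁻¹) := by
  rw [dzCoeff, dzCoeff, qNat_add_self hζ, inv_pow_add_self hζ]
  push_cast
  ring

variable [NeZero n]

theorem ne_zero_of_pow_eq_one : ζ ≠ 0 :=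
  (IsUnit.of_pow_eq_one hζ (NeZero.ne n)).ne_zero

theorem vertex_add_one (j : Fin n) : vertex ζ (j + 1) = vertex ζ j * ζ := by
  rw [vertex, vertex, Fin.val_add, Fin.val_one', Nat.add_mod_mod, ← pow_eq_pow_mod _ hζ,
    pow_succ]

theorem vertex_sub_one (j : Fin n) : vertex ζ (j - 1) = vertex ζ j * ζ⁻¹ := by
  rw [eq_mul_inv_iff_mul_eq₀ (ne_zero_of_pow_eq_one hζ), ← vertex_add_one hζ, sub_add_cancel]

theorem sum_vertex_pow_mul_inv_pow (k k' : ℕ) :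
    ∑ j : Fin n, vertex ζ j ^ k * (vertex ζ j)⁻¹ ^ k' =
      if ζ ^ k = ζ ^ k' then (n : ℂ) else 0 := by
  have hζk' : ζ ^ k' ≠ 0 := pow_ne_zero _ (ne_zero_of_pow_eq_one hζ)
  have hterm (j : Fin n) :
      vertex ζ j ^ k * (vertex ζ j)⁻¹ ^ k' = (ζ ^ k * (ζ ^ k')⁻¹) ^ (j : ℕ) := by
    simp only [vertex, ← pow_mul, inv_pow, mul_pow, mul_comm]
  simp_rw [hterm]
  rw [Fin.sum_univ_eq_sum_range (fun j => (ζ ^ k * (ζ ^ k')⁻¹) ^ j)]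
  split_ifs with h
  · simp [h, mul_inv_cancel₀ hζk']
  · have hne : ζ ^ k * (ζ ^ k')⁻¹ ≠ 1 := by rwa [Ne, mul_inv_eq_one₀ hζk']
    rw [geom_sum_eq hne, mul_pow, inv_pow, ← pow_mul, ← pow_mul, mul_comm k, mul_comm k',
      pow_mul, pow_mul, hζ, one_pow, one_pow, inv_one, mul_one, sub_self, zero_div]

end RootOfUnity

section Jacobian

variable [NeZero n]

def sideSum (n : ℕ) [NeZero n] (k : ℕ) (j : Fin n) : MvPolynomial (Fin n ⊕ Fin n) ℂ :=
  ∑ m ∈ range k, Zv n j ^ (k - 1 - m) * Zv n (j + 1) ^ m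

theorem nu_eq_sum_sideSum (k : ℕ) :
    nu n k = C (Complex.I / 4) * ∑ j : Fin n, (Wv n j - Wv n (j + 1)) * sideSum n k j := rfl

theorem sub_mul_sideSum (k : ℕ) (j : Fin n) :
    (Zv n j - Zv n (j + 1)) * sideSum n k j = Zv n j ^ k - Zv n (j + 1) ^ k := by
  rw [sideSum, mul_comm, ← geom_sum₂_mul, geom_sum₂_comm]
  simp_rw [mul_comm]

theorem pderiv_inr_sideSum (k : ℕ) (j' j : Fin n) :
    pderiv (Sum.inr j') (sideSum n k j) = 0 := by
  simp [sideSum, pderiv_inr_Zv]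

section PolygonPoint

variable (hζ : ζ ^ n = 1) (hζ1 : ζ ≠ 1)
include hζ hζ1

theorem eval_sideSum (k : ℕ) (j : Fin n) :
    eval (regularPolygon ζ) (sideSum n k j) =
      vertex ζ j ^ k * (vertex ζ j)⁻¹ * qNat ζ k := by
  have hv : vertex ζ j ≠ 0 := pow_ne_zero _ (ne_zero_of_pow_eq_one hζ)
  have hζ1' : 1 - ζ ≠ 0 := sub_ne_zero.2 hζ1.symm
  rw [eval_eq_div_of_mul_eq (sub_mul_sideSum k j)] <;>
    simp only [map_sub, map_pow, eval_Zv, vertex_add_one hζ]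
  · rw [qNat]
    field_simp
    ring
  · rw [← mul_one_sub]
    exact mul_ne_zero hv hζ1'

/-- Differentiating `(z_j - z_{j+1}) * sideSum = z_j ^ k - z_{j+1} ^ k` avoids the sum
over `m`. -/
theorem eval_pderiv_inl_sideSum (k : ℕ) (j' j : Fin n) :
    eval (regularPolygon ζ) (pderiv (Sum.inl j') (sideSum n k j)) =
      (if j = j' then
        vertex ζ j ^ k * (vertex ζ j)⁻¹ ^ 2 * (k - qNat ζ k) / (1 - ζ)
      else 0) -
      (if j + 1 = j' then
        vertex ζ j ^ k * (vertex ζ j)⁻¹ ^ 2 * (k * ζ ^ k * ζ⁻¹ - qNat ζ k) / (1 - ζ)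
      else 0) := by
  have hζ0 := ne_zero_of_pow_eq_one hζ
  have hv : vertex ζ j ≠ 0 := pow_ne_zero _ hζ0
  have hζ1' : 1 - ζ ≠ 0 := sub_ne_zero.2 hζ1.symm
  rw [eval_pderiv_eq_div_of_mul_eq (sub_mul_sideSum k j)]
  · simp only [map_sub, map_mul, map_pow, pderiv_pow, pderiv_inl_Zv, eval_Zv,
      eval_sideSum hζ hζ1, vertex_add_one hζ, map_natCast, apply_ite (eval _), map_one, map_zero]
    rw [natCast_mul_pow_pred hv, natCast_mul_pow_pred (mul_ne_zero hv hζ0), qNat]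
    split_ifs <;> field_simp <;> ring
  · simp only [map_sub, eval_Zv, vertex_add_one hζ, ← mul_one_sub]
    exact mul_ne_zero hv hζ1'

theorem eval_pderiv_inl_nu (k : ℕ) (j' : Fin n) :
    eval (regularPolygon ζ) (pderiv (Sum.inl j') (nu n k)) =
      dzCoeff ζ k * vertex ζ j' ^ k * (vertex ζ j')⁻¹ ^ 3 := by
  have hζ0 := ne_zero_of_pow_eq_one hζ
  have hv : vertex ζ j' ≠ 0 := pow_ne_zero _ hζ0
  rw [nu_eq_sum_sideSum, pderiv_C_mul, map_mul, eval_C, map_sum, map_sum]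
  simp only [pderiv_mul, map_sub, pderiv_inl_Wv, sub_self, zero_mul, zero_add, map_mul, eval_Wv,
    eval_pderiv_inl_sideSum hζ hζ1, mul_sub, mul_ite, mul_zero, sum_sub_distrib,
    Fintype.sum_ite_eq', Fintype.sum_ite_add_eq, vertex_add_one hζ, vertex_sub_one hζ]
  simp only [dzCoeff, qNat, inv_pow, mul_pow]
  field_simp
  ring

theorem eval_pderiv_inr_nu (k : ℕ) (j' : Fin n) :
    eval (regularPolygon ζ) (pderiv (Sum.inr j') (nu n k)) =
      dwCoeff ζ k * vertex ζ j' ^ k * (vertex ζ j')⁻¹ := by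
  have hv : vertex ζ j' ≠ 0 := pow_ne_zero _ (ne_zero_of_pow_eq_one hζ)
  rw [nu_eq_sum_sideSum, pderiv_C_mul, map_mul, eval_C, map_sum, map_sum]
  simp only [pderiv_mul, map_sub, pderiv_inr_Wv, pderiv_inr_sideSum, mul_zero, add_zero,
    apply_ite (eval _), map_zero, eval_sideSum hζ hζ1, sub_mul, ite_mul, one_mul, zero_mul,
    sum_sub_distrib, Fintype.sum_ite_eq', Fintype.sum_ite_add_eq, vertex_sub_one hζ]
  rw [dwCoeff]
  field_simp
  ring

end PolygonPoint

def polygonJacobian {ι : Type*} (n : ℕ) [NeZero n] (ζ : ℂ) (κ : ι → ℕ) :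
    Matrix ι (Fin n ⊕ Fin n) ℂ :=
  (jacobian fun i => nu n (κ i)).map (eval (regularPolygon ζ))

def dualFourierMatrix {ι : Type*} (n : ℕ) (ζ : ℂ) (c a : ℕ → ℂ) (κ : ι → ℕ) :
    Matrix (Fin n ⊕ Fin n) ι ℂ :=
  Matrix.of fun x i => Sum.elim (fun j => c (κ i) * (vertex ζ j)⁻¹ ^ κ i * vertex ζ j ^ 3)
    (fun j => a (κ i) * (vertex ζ j)⁻¹ ^ κ i * vertex ζ j) x

theorem polygonJacobian_mul_dualFourierMatrix_apply (hζ : ζ ^ n = 1) (hζ1 : ζ ≠ 1)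
    {ι : Type*} [Fintype ι] (κ : ι → ℕ) (c a : ℕ → ℂ) (i i' : ι) :
    (polygonJacobian n ζ κ * dualFourierMatrix n ζ c a κ) i i' =
      (dzCoeff ζ (κ i) * c (κ i') + dwCoeff ζ (κ i) * a (κ i')) *
        if ζ ^ κ i = ζ ^ κ i' then (n : ℂ) else 0 := by
  have hζ0 := ne_zero_of_pow_eq_one hζ
  rw [← sum_vertex_pow_mul_inv_pow hζ, add_mul, mul_sum, mul_sum, Matrix.mul_apply,
    Fintype.sum_sum_type]
  simp only [polygonJacobian, Matrix.map_apply, jacobian, Matrix.of_apply, dualFourierMatrix,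
    Sum.elim_inl, Sum.elim_inr, eval_pderiv_inl_nu hζ hζ1, eval_pderiv_inr_nu hζ hζ1]
  congr 1 <;> refine sum_congr rfl fun j _ => ?_ <;>
    have hv : vertex ζ j ≠ 0 := pow_ne_zero _ hζ0 <;> field_simp

end Jacobian

section PrimitiveRoot

/-- Column `k` of the dual Fourier matrix pairs the two Fourier modes of row `k`; for `k < n` it is
chosen to annihilate row `k + n`, the only other row carrying the same modes. -/
def zWeight (n : ℕ) (ζ : ℂ) (k : ℕ) : ℂ :=
  if k < n then dwCoeff ζ k else if k < n + 2 then 1 else 0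

def wWeight (n : ℕ) (ζ : ℂ) (k : ℕ) : ℂ :=
  if k < n then -dzCoeff ζ (k + n) else if k < n + 2 then 0 else 1

def weightPairing (n : ℕ) (ζ : ℂ) (k k' : ℕ) : ℂ :=
  dzCoeff ζ k * zWeight n ζ k' + dwCoeff ζ k * wWeight n ζ k'

variable (hζ : IsPrimitiveRoot ζ n)
include hζ

theorem qNat_ne_zero {k : ℕ} (hk : 0 < k) (hkn : k < n) : qNat ζ k ≠ 0 :=
  div_ne_zero (sub_ne_zero.2 (hζ.pow_ne_one_of_pos_of_lt hk.ne' hkn).symm)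
    (sub_ne_zero.2 (hζ.ne_one (by omega)).symm)

theorem dwCoeff_ne_zero {k : ℕ} (hk : 2 ≤ k) (hkn : k < n) : dwCoeff ζ k ≠ 0 := by
  have hζ0 : ζ ≠ 0 := hζ.ne_zero (by omega)
  have hpow : ζ * ζ⁻¹ ^ k = (ζ ^ (k - 1))⁻¹ := by
    obtain ⟨m, rfl⟩ := Nat.exists_eq_add_of_le' (by omega : 1 ≤ k)
    rw [Nat.add_sub_cancel, pow_succ, inv_pow]
    field_simp
  refine mul_ne_zero (mul_ne_zero (by simp) (qNat_ne_zero hζ (by omega) hkn)) ?_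
  rw [hpow, sub_ne_zero, ne_comm, Ne, inv_eq_one]
  exact hζ.pow_ne_one_of_pos_of_lt (by omega) (by omega)

theorem sub_inv_ne_zero (hn : 3 ≤ n) : ζ - ζ⁻¹ ≠ 0 := by
  intro h
  apply hζ.pow_ne_one_of_pos_of_lt two_ne_zero (by omega)
  rw [sq]
  nth_rw 2 [sub_eq_zero.1 h]
  exact mul_inv_cancel₀ (hζ.ne_zero (by omega))

theorem eq_add_of_pow_eq_pow {k k' : ℕ} (hk' : k' < k) (hk : k < k' + 2 * n)
    (h : ζ ^ k = ζ ^ k') : k = k' + n := by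
  obtain ⟨d, rfl⟩ := Nat.exists_eq_add_of_le hk'.le
  rw [pow_add, mul_eq_left₀ (pow_ne_zero _ (hζ.ne_zero (by omega))),
    hζ.pow_eq_one_iff_dvd] at h
  obtain ⟨c, rfl⟩ := h
  obtain _ | _ | c := c <;> [omega; omega; nlinarith]

theorem weightPairing_add_self_eq_zero {k : ℕ} (hk : k < n) :
    weightPairing n ζ (k + n) k = 0 := by
  rw [weightPairing, zWeight, wWeight, if_pos hk, if_pos hk, dwCoeff_add_self hζ.pow_eq_one]
  ring

theorem weightPairing_self_ne_zero (hn : 3 ≤ n) {k : ℕ} (hk : 2 ≤ k) (hkn : k < 2 * n) :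
    weightPairing n ζ k k ≠ 0 := by
  have hζn := hζ.pow_eq_one
  have hgap : Complex.I / 4 * n * (ζ - ζ⁻¹) ≠ 0 :=
    mul_ne_zero (mul_ne_zero (by simp) (Nat.cast_ne_zero.2 (by omega))) (sub_inv_ne_zero hζ hn)
  simp only [weightPairing, zWeight, wWeight]
  split_ifs with hlt hlt₂
  · rw [dzCoeff_add_self hζn]
    convert neg_ne_zero.2 (mul_ne_zero (dwCoeff_ne_zero hζ hk hlt) hgap) using 1
    ring
  · obtain ⟨m, rfl⟩ := Nat.exists_eq_add_of_le (not_lt.1 hlt)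
    have hm : m = 0 ∨ m = 1 := by omega
    rw [mul_one, mul_zero, add_zero, add_comm, dzCoeff_add_self hζn]
    rcases hm with rfl | rfl
    · rwa [dzCoeff_zero, zero_add]
    · rwa [dzCoeff_one (hζ.ne_one (by omega)), zero_add]
  · obtain ⟨m, rfl⟩ := Nat.exists_eq_add_of_le (not_lt.1 hlt)
    rw [mul_zero, mul_one, zero_add, add_comm, dwCoeff_add_self hζn]
    exact dwCoeff_ne_zero hζ (by omega) (by omega)

end PrimitiveRoot

end HarmonicMoments

open HarmonicMoments

theorem statement3 (n : ℕ) [NeZero n] (hn : 3 ≤ n) :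
    AlgebraicIndependent ℂ (fun i : Fin (2 * n - 2) => nu n ((i : ℕ) + 2)) := by
  set ζ := Complex.exp (2 * Real.pi * Complex.I / n)
  have hζ : IsPrimitiveRoot ζ n := Complex.isPrimitiveRoot_exp n (NeZero.ne n)
  let κ (i : Fin (2 * n - 2)) : ℕ := (i : ℕ) + 2
  let T := dualFourierMatrix n ζ (zWeight n ζ) (wWeight n ζ) κ
  have hM := polygonJacobian_mul_dualFourierMatrix_apply hζ.pow_eq_one (hζ.ne_one (by omega))
    κ (zWeight n ζ) (wWeight n ζ)
  simp only [κ] at hM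
  refine algebraicIndependent_of_det_jacobian_mul_ne_zero _ (regularPolygon ζ) T ?_
  change (polygonJacobian n ζ κ * T).det ≠ 0
  rw [Matrix.det_of_isUpperTriangular]
  · refine prod_ne_zero_iff.2 fun i _ => ?_
    rw [hM, if_pos rfl]
    exact mul_ne_zero (weightPairing_self_ne_zero hζ hn (by omega) (by omega))
      (Nat.cast_ne_zero.2 (NeZero.ne n))
  · intro i i' (hlt : i' < i)
    rw [hM]
    split_ifs with h
    · have hi := eq_add_of_pow_eq_pow hζ (by simpa using hlt) (by omega) h
      exact mul_eq_zero_of_left (hi ▸ weightPairing_add_self_eq_zero hζ (by omega)) _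
    · rw [mul_zero]
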